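/- Let n ≥ 2 be an integer and δ ∈ (1/2, 1]. Then sup over positive integers m and X ∈ C(n, m) of P(max_{1 ≤ i < j ≤ n} |X_i − X_j| ≥ δ) is at most 2 times the sup over positive integers m and X ∈ C'(n, m) of P( {max_{1 ≤ i < j ≤ n} |X_i − X_j| ≥ δ} ∩ A ), where A is the event associated to X. -/

import Mathlib

open MeasureTheory

noncomputable section

/-- The event that some pair of the variables differ by at least `δ`. -/
def maxEvent {Ω : Type} {n : ℕ} (X : Fin n → Ω → ℝ) (δ : ℝ) : Set Ω :=
  {ω | ∃ i j : Fin n, i < j ∧ δ ≤ |X i ω - X j ω|}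

/-- `X` is coherent with associated event `A`. -/
def CoherentWith {Ω : Type} [mΩ : MeasurableSpace Ω] (P : Measure Ω) {n : ℕ}
    (X : Fin n → Ω → ℝ) (A : Set Ω) : Prop :=
  ∃ G : Fin n → MeasurableSpace Ω, (∀ i, G i ≤ mΩ) ∧ MeasurableSet A ∧
    ∀ i, X i =ᵐ[P] P[A.indicator (fun _ => (1 : ℝ)) | G i]

/-- `X ∈ C(n, m)` with associated event `A`: each coordinate takes (almost surely)
at most `m` distinct values. -/
def MemCWith {Ω : Type} [mΩ : MeasurableSpace Ω] (P : Measure Ω) {n : ℕ}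
    (X : Fin n → Ω → ℝ) (A : Set Ω) (m : ℕ) : Prop :=
  CoherentWith P X A ∧ ∀ j, ∃ s : Finset ℝ, s.card ≤ m ∧ ∀ᵐ ω ∂P, X j ω ∈ s

/-- `X ∈ C'(n, m)` with associated event `A`: additionally `P(A) = 1/2` and the balance
condition holds. -/
def MemC'With {Ω : Type} [mΩ : MeasurableSpace Ω] (P : Measure Ω) {n : ℕ}
    (X : Fin n → Ω → ℝ) (A : Set Ω) (m : ℕ) : Prop :=
  MemCWith P X A m ∧ P A = 1 / 2 ∧
    ∀ x ∈ Set.Ioc (0 : ℝ) 1,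
      (1 - x) / x * ∑ i : Fin n, (P ({ω | X i ω = x} ∩ A)).toReal =
        ∑ i : Fin n, (P ({ω | X i ω = 1 - x} ∩ A)).toReal

/-!
Double the probability space: give each of two copies of `Ω` mass `1/2`, keep `(X, A)` on the
first copy and put `(1 - X, Aᶜ)` on the second. Since `E[1_{Aᶜ} | G] = 1 - E[1_A | G]`, the new
vector is coherent for the σ-algebras `G_i ⊗ 2^Bool`, with at most twice as many values per
coordinate, and the new event has probability `1/2`. The balance condition comes from
`P({X_i = y} ∩ A) = y P(X_i = y)`, valid because `{X_i = y}` is `G_i`-measurable. Finally the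
reflection `x ↦ 1 - x` preserves all distances `|X_i - X_j|`, so the event
`max |X'_i - X'_j| ≥ δ` for the new vector `X'` is `M = {max |X_i - X_j| ≥ δ}` on both copies,
and it meets the new event in mass `(P(M ∩ A) + P(M ∩ Aᶜ)) / 2 = P(M) / 2`.
-/

open scoped ENNReal

theorem Real.sSup_le_mul_sSup {S T : Set ℝ} {c : ℝ} (hc : 0 ≤ c) (hT : BddAbove T)
    (hT_nonneg : ∀ t ∈ T, 0 ≤ t) (h : ∀ s ∈ S, ∃ t ∈ T, s ≤ c * t) : sSup S ≤ c * sSup T := by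
  refine Real.sSup_le (fun s hs => ?_) (mul_nonneg hc (Real.sSup_nonneg hT_nonneg))
  obtain ⟨t, ht, hst⟩ := h s hs
  exact hst.trans (mul_le_mul_of_nonneg_left (le_csSup hT ht) hc)

section Doubling

variable {Ω β : Type*}

def boolGlue (f g : Ω → β) : Ω × Bool → β := fun q => cond q.2 (g q.1) (f q.1)

@[simp] theorem boolGlue_false (f g : Ω → β) (ω : Ω) : boolGlue f g (ω, false) = f ω := rfl

@[simp] theorem boolGlue_true (f g : Ω → β) (ω : Ω) : boolGlue f g (ω, true) = g ω := rfl

variable [mΩ : MeasurableSpace Ω]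

theorem Measurable.boolGlue [MeasurableSpace β] {f g : Ω → β} (hf : Measurable f)
    (hg : Measurable g) : Measurable (boolGlue f g) :=
  measurable_from_prod_countable_left fun b => by cases b; exacts [hf, hg]

def doubleMeasure (P : Measure Ω) : Measure (Ω × Bool) :=
  (2⁻¹ : ℝ≥0∞) • (P.map (·, false) + P.map (·, true))

variable (P : Measure Ω)

theorem doubleMeasure_apply (S : Set (Ω × Bool)) :
    doubleMeasure P S = 2⁻¹ * (P ((·, false) ⁻¹' S) + P ((·, true) ⁻¹' S)) := by
  rw [doubleMeasure, Measure.smul_apply, Measure.add_apply,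
    (measurableEmbedding_prod_mk_right false).map_apply,
    (measurableEmbedding_prod_mk_right true).map_apply, smul_eq_mul]

theorem toReal_doubleMeasure_apply [IsFiniteMeasure P] (S : Set (Ω × Bool)) :
    (doubleMeasure P S).toReal =
      2⁻¹ * ((P ((·, false) ⁻¹' S)).toReal + (P ((·, true) ⁻¹' S)).toReal) := by
  rw [doubleMeasure_apply, ENNReal.toReal_mul, ENNReal.toReal_add (measure_ne_top _ _)
    (measure_ne_top _ _), ENNReal.toReal_inv, ENNReal.toReal_ofNat]

instance [IsProbabilityMeasure P] : IsProbabilityMeasure (doubleMeasure P) :=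
  ⟨by simp [doubleMeasure_apply, one_add_one_eq_two, ENNReal.inv_mul_cancel]⟩

theorem ae_doubleMeasure_iff {p : Ω × Bool → Prop} :
    (∀ᵐ q ∂doubleMeasure P, p q) ↔ (∀ᵐ ω ∂P, p (ω, false)) ∧ ∀ᵐ ω ∂P, p (ω, true) := by
  rw [doubleMeasure, Measure.ae_ennreal_smul_measure_iff (by norm_num), ae_add_measure_iff,
    (measurableEmbedding_prod_mk_right false).ae_map_iff,
    (measurableEmbedding_prod_mk_right true).ae_map_iff]

theorem integrable_doubleMeasure_iff {g : Ω × Bool → ℝ} :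
    Integrable g (doubleMeasure P) ↔
      Integrable (fun ω => g (ω, false)) P ∧ Integrable (fun ω => g (ω, true)) P := by
  rw [doubleMeasure, integrable_smul_measure (by norm_num) (by norm_num), integrable_add_measure,
    (measurableEmbedding_prod_mk_right false).integrable_map_iff,
    (measurableEmbedding_prod_mk_right true).integrable_map_iff]
  rfl

theorem setIntegral_doubleMeasure {g : Ω × Bool → ℝ} (hg : Integrable g (doubleMeasure P))
    (S : Set (Ω × Bool)) :
    ∫ q in S, g q ∂doubleMeasure P =
      2⁻¹ * (∫ ω in (·, false) ⁻¹' S, g (ω, false) ∂P +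
        ∫ ω in (·, true) ⁻¹' S, g (ω, true) ∂P) := by
  obtain ⟨hg₀, hg₁⟩ := (integrable_doubleMeasure_iff P).1 hg
  rw [doubleMeasure, Measure.restrict_smul, Measure.restrict_add,
    (measurableEmbedding_prod_mk_right false).restrict_map,
    (measurableEmbedding_prod_mk_right true).restrict_map, integral_smul_measure,
    integral_add_measure, (measurableEmbedding_prod_mk_right false).integral_map,
    (measurableEmbedding_prod_mk_right true).integral_map]
  · simp
  · exact ((measurableEmbedding_prod_mk_right false).integrable_map_iff).2 hg₀.restrict
  · exact ((measurableEmbedding_prod_mk_right true).integrable_map_iff).2 hg₁.restrict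

end Doubling

theorem MeasurableSpace.prod_mono_left {α β : Type*} {m₁ m₂ : MeasurableSpace α} (h : m₁ ≤ m₂)
    (m : MeasurableSpace β) : m₁.prod m ≤ m₂.prod m :=
  sup_le_sup (MeasurableSpace.comap_mono h) le_rfl

section Coherence

variable {Ω : Type*} {m : MeasurableSpace Ω} [mΩ : MeasurableSpace Ω] {P : Measure Ω}
  [IsFiniteMeasure P]

instance : IsFiniteMeasure (doubleMeasure P) :=
  ⟨by simp [doubleMeasure_apply, ENNReal.mul_lt_top, ENNReal.add_lt_top, measure_lt_top]⟩

theorem condExp_boolGlue (hm : m ≤ mΩ) {f g : Ω → ℝ} (hf : Integrable f P) (hg : Integrable g P) :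
    boolGlue (P[f|m]) (P[g|m]) =ᵐ[doubleMeasure P]
      (doubleMeasure P)[boolGlue f g | m.prod ⊤] := by
  have h_int : Integrable (boolGlue f g) (doubleMeasure P) :=
    (integrable_doubleMeasure_iff P).2 ⟨hf, hg⟩
  have h_int_condExp : Integrable (boolGlue (P[f|m]) (P[g|m])) (doubleMeasure P) :=
    (integrable_doubleMeasure_iff P).2 ⟨integrable_condExp, integrable_condExp⟩
  refine ae_eq_condExp_of_forall_setIntegral_eq (MeasurableSpace.prod_mono_left hm ⊤) h_int
    (fun _ _ _ => h_int_condExp.integrableOn) (fun S hS _ => ?_) ?_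
  · have hS_slice (b : Bool) : MeasurableSet[m] ((·, b) ⁻¹' S) :=
      @measurable_prodMk_right _ _ m ⊤ b _ hS
    rw [setIntegral_doubleMeasure P h_int_condExp, setIntegral_doubleMeasure P h_int]
    simp only [boolGlue_false, boolGlue_true, setIntegral_condExp hm hf (hS_slice false),
      setIntegral_condExp hm hg (hS_slice true)]
  · exact (@Measurable.boolGlue _ _ m _ _ _ stronglyMeasurable_condExp.measurable
      stronglyMeasurable_condExp.measurable).stronglyMeasurable.aestronglyMeasurable

theorem condExp_indicator_compl (hm : m ≤ mΩ) {A : Set Ω} (hA : MeasurableSet A) :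
    P[Aᶜ.indicator (fun _ => (1 : ℝ)) | m] =ᵐ[P]
      fun ω => 1 - P[A.indicator (fun _ => 1) | m] ω := by
  rw [Set.indicator_compl]
  filter_upwards [condExp_sub (integrable_const (1 : ℝ)) ((integrable_const 1).indicator hA) m]
    with ω h
  rw [h, Pi.sub_apply, condExp_const hm]

theorem toReal_measure_level_inter {A : Set Ω} (hm : m ≤ mΩ) (hA : MeasurableSet A)
    {X : Ω → ℝ} (hX : X =ᵐ[P] P[A.indicator (fun _ => 1) | m]) (y : ℝ) :
    (P ({ω | X ω = y} ∩ A)).toReal = y * (P {ω | X ω = y}).toReal := by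
  set T := P[A.indicator (fun _ => (1 : ℝ)) | m] ⁻¹' {y}
  have hT : MeasurableSet[m] T := stronglyMeasurable_condExp.measurable (measurableSet_singleton y)
  have hXT : {ω | X ω = y} =ᵐ[P] T := by
    rw [Filter.eventuallyEq_set]
    filter_upwards [hX] with ω h
    simp [T, h]
  calc (P ({ω | X ω = y} ∩ A)).toReal
      = ∫ ω in T, A.indicator (fun _ => (1 : ℝ)) ω ∂P := by
        rw [measure_congr (hXT.inter (Filter.EventuallyEq.refl _ A)), setIntegral_indicator hA,
          setIntegral_const, smul_eq_mul, mul_one, measureReal_def]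
    _ = ∫ ω in T, P[A.indicator (fun _ => (1 : ℝ)) | m] ω ∂P :=
        (setIntegral_condExp hm ((integrable_const 1).indicator hA) hT).symm
    _ = y * (P {ω | X ω = y}).toReal := by
        rw [setIntegral_congr_fun (hm _ hT) fun ω hω => hω, setIntegral_const, smul_eq_mul,
          mul_comm, measure_congr hXT, measureReal_def]

theorem toReal_measure_level_inter_compl {A : Set Ω} (hm : m ≤ mΩ) (hA : MeasurableSet A)
    {X : Ω → ℝ} (hX : X =ᵐ[P] P[A.indicator (fun _ => 1) | m]) (y : ℝ) :
    (P ({ω | X ω = y} ∩ Aᶜ)).toReal = (1 - y) * (P {ω | X ω = y}).toReal := by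
  have h_split := measureReal_inter_add_sdiff (μ := P) (s := {ω | X ω = y}) hA
  rw [Set.sdiff_eq] at h_split
  simp only [measureReal_def] at h_split
  linarith [toReal_measure_level_inter hm hA hX y]

end Coherence

section Symmetrize

variable {Ω : Type*} {n : ℕ} {A : Set Ω}

def symmetrize (X : Fin n → Ω → ℝ) : Fin n → Ω × Bool → ℝ :=
  fun i => boolGlue (X i) fun ω => 1 - X i ω

def symmetrizeEvent (A : Set Ω) : Set (Ω × Bool) := A ×ˢ {false} ∪ Aᶜ ×ˢ {true}

@[simp] theorem preimage_symmetrizeEvent_false : (·, false) ⁻¹' symmetrizeEvent A = A := by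
  ext; simp [symmetrizeEvent]

@[simp] theorem preimage_symmetrizeEvent_true : (·, true) ⁻¹' symmetrizeEvent A = Aᶜ := by
  ext; simp [symmetrizeEvent]

theorem indicator_symmetrizeEvent :
    (symmetrizeEvent A).indicator (fun _ => (1 : ℝ)) =
      boolGlue (A.indicator fun _ => 1) (Aᶜ.indicator fun _ => 1) := by
  ext ⟨ω, b⟩
  cases b <;> by_cases h : ω ∈ A <;> simp [symmetrizeEvent, h]

theorem MeasurableSet.symmetrizeEvent [MeasurableSpace Ω] (hA : MeasurableSet A) :
    MeasurableSet (symmetrizeEvent A) :=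
  (hA.prod (measurableSet_singleton _)).union (hA.compl.prod (measurableSet_singleton _))

theorem preimage_level_symmetrize_false (X : Fin n → Ω → ℝ) (i : Fin n) (y : ℝ) :
    (·, false) ⁻¹' {q | symmetrize X i q = y} = {ω | X i ω = y} :=
  rfl

theorem preimage_level_symmetrize_true (X : Fin n → Ω → ℝ) (i : Fin n) (y : ℝ) :
    (·, true) ⁻¹' {q | symmetrize X i q = y} = {ω | X i ω = 1 - y} := by
  ext ω
  simp only [Set.mem_preimage, Set.mem_ofPred_eq, symmetrize, boolGlue_true]
  constructor <;> intro h <;> linarith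

end Symmetrize

section SymmetrizedVector

variable {Ω : Type} {n k : ℕ} {X : Fin n → Ω → ℝ} {A : Set Ω}

theorem preimage_maxEvent_symmetrize (X : Fin n → Ω → ℝ) (δ : ℝ) (b : Bool) :
    (·, b) ⁻¹' maxEvent (symmetrize X) δ = maxEvent X δ := by
  cases b
  · rfl
  · ext ω
    simp [maxEvent, symmetrize, sub_sub_sub_cancel_left, abs_sub_comm]

variable [MeasurableSpace Ω] {P : Measure Ω}

theorem CoherentWith.measurableSet (h : CoherentWith P X A) : MeasurableSet A :=
  h.choose_spec.2.1

theorem coherentWith_symmetrize [IsFiniteMeasure P] (h : CoherentWith P X A) :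
    CoherentWith (doubleMeasure P) (symmetrize X) (symmetrizeEvent A) := by
  obtain ⟨G, hG, hA, hX⟩ := h
  refine ⟨fun i => (G i).prod ⊤, fun i => MeasurableSpace.prod_mono_left (hG i) ⊤,
    hA.symmetrizeEvent, fun i => ?_⟩
  rw [indicator_symmetrizeEvent]
  refine Filter.EventuallyEq.trans ?_ (condExp_boolGlue (hG i) ((integrable_const 1).indicator hA)
    ((integrable_const 1).indicator hA.compl))
  refine (ae_doubleMeasure_iff P).2 ⟨hX i, ?_⟩
  filter_upwards [hX i, condExp_indicator_compl (hG i) hA] with ω hXω h_compl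
  simp [symmetrize, hXω, h_compl]

theorem memCWith_symmetrize [IsFiniteMeasure P] (h : MemCWith P X A k) :
    MemCWith (doubleMeasure P) (symmetrize X) (symmetrizeEvent A) (2 * k) := by
  refine ⟨coherentWith_symmetrize h.1, fun j => ?_⟩
  obtain ⟨s, hs_card, hs⟩ := h.2 j
  refine ⟨s ∪ s.image (1 - ·), ?_, (ae_doubleMeasure_iff P).2 ⟨?_, ?_⟩⟩
  · calc (s ∪ s.image (1 - ·)).card ≤ s.card + (s.image (1 - ·)).card := Finset.card_union_le _ _
      _ ≤ 2 * k := by linarith [Finset.card_image_le (s := s) (f := (1 - ·))]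
  · filter_upwards [hs] with ω hω
    simp [symmetrize, hω]
  · filter_upwards [hs] with ω hω
    simp only [symmetrize, boolGlue_true, Finset.mem_union, Finset.mem_image]
    exact Or.inr ⟨X j ω, hω, rfl⟩

theorem doubleMeasure_symmetrizeEvent [IsProbabilityMeasure P] (hA : MeasurableSet A) :
    doubleMeasure P (symmetrizeEvent A) = 1 / 2 := by
  rw [doubleMeasure_apply, preimage_symmetrizeEvent_false, preimage_symmetrizeEvent_true,
    prob_add_prob_compl hA, mul_one, one_div]

theorem toReal_doubleMeasure_level_inter_symmetrizeEvent [IsFiniteMeasure P]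
    (h : CoherentWith P X A) (i : Fin n) (y : ℝ) :
    (doubleMeasure P ({q | symmetrize X i q = y} ∩ symmetrizeEvent A)).toReal =
      2⁻¹ * y * ((P {ω | X i ω = y}).toReal + (P {ω | X i ω = 1 - y}).toReal) := by
  obtain ⟨G, hG, hA, hX⟩ := h
  rw [toReal_doubleMeasure_apply, Set.preimage_inter, Set.preimage_inter,
    preimage_symmetrizeEvent_false, preimage_symmetrizeEvent_true,
    preimage_level_symmetrize_false, preimage_level_symmetrize_true,
    toReal_measure_level_inter (hG i) hA (hX i) y,
    toReal_measure_level_inter_compl (hG i) hA (hX i) (1 - y)]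
  ring

theorem balance_symmetrize [IsFiniteMeasure P] (h : CoherentWith P X A) (x : ℝ)
    (hx : x ∈ Set.Ioc (0 : ℝ) 1) :
    (1 - x) / x * ∑ i : Fin n,
        (doubleMeasure P ({q | symmetrize X i q = x} ∩ symmetrizeEvent A)).toReal =
      ∑ i : Fin n,
        (doubleMeasure P ({q | symmetrize X i q = 1 - x} ∩ symmetrizeEvent A)).toReal := by
  simp only [toReal_doubleMeasure_level_inter_symmetrizeEvent h, sub_sub_cancel, Finset.mul_sum]
  refine Finset.sum_congr rfl fun i _ => ?_
  field_simp [hx.1.ne']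
  ring

theorem memC'With_symmetrize [IsProbabilityMeasure P] (h : MemCWith P X A k) :
    MemC'With (doubleMeasure P) (symmetrize X) (symmetrizeEvent A) (2 * k) :=
  ⟨memCWith_symmetrize h, doubleMeasure_symmetrizeEvent h.1.measurableSet, balance_symmetrize h.1⟩

theorem toReal_measure_maxEvent_eq_two_mul [IsFiniteMeasure P] (hA : MeasurableSet A) (δ : ℝ) :
    (P (maxEvent X δ)).toReal =
      2 * (doubleMeasure P (maxEvent (symmetrize X) δ ∩ symmetrizeEvent A)).toReal := by
  rw [toReal_doubleMeasure_apply, Set.preimage_inter, Set.preimage_inter,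
    preimage_maxEvent_symmetrize, preimage_maxEvent_symmetrize, preimage_symmetrizeEvent_false,
    preimage_symmetrizeEvent_true, ← Set.sdiff_eq]
  have := measureReal_inter_add_sdiff (μ := P) (s := maxEvent X δ) hA
  simp only [measureReal_def] at this
  linarith

end SymmetrizedVector

theorem symmetrization_reduction (n : ℕ) (δ : ℝ) :
    sSup {p : ℝ | ∃ (Ω : Type) (mΩ : MeasurableSpace Ω) (P : Measure Ω),
        IsProbabilityMeasure P ∧ ∃ (m : ℕ) (X : Fin n → Ω → ℝ) (A : Set Ω),
          1 ≤ m ∧ MemCWith P X A m ∧ p = (P (maxEvent X δ)).toReal} ≤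
      2 * sSup {p : ℝ | ∃ (Ω : Type) (mΩ : MeasurableSpace Ω) (P : Measure Ω),
        IsProbabilityMeasure P ∧ ∃ (m : ℕ) (X : Fin n → Ω → ℝ) (A : Set Ω),
          1 ≤ m ∧ MemC'With P X A m ∧ p = (P (maxEvent X δ ∩ A)).toReal} := by
  refine Real.sSup_le_mul_sSup zero_le_two ⟨1, ?_⟩ ?_ ?_
  · rintro _ ⟨Ω, _, P, _, -, -, -, -, -, rfl⟩
    exact measureReal_le_one
  · rintro _ ⟨Ω, _, P, _, -, -, -, -, -, rfl⟩
    exact ENNReal.toReal_nonneg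
  · rintro _ ⟨Ω, _, P, _, m, X, A, hm, hX, rfl⟩
    exact ⟨_, ⟨Ω × Bool, _, doubleMeasure P, inferInstance, 2 * m, symmetrize X,
      symmetrizeEvent A, by omega, memC'With_symmetrize hX, rfl⟩,
      (toReal_measure_maxEvent_eq_two_mul hX.1.measurableSet δ).le⟩

end
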